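/- Consider in ℝ³ the problem: minimize x₃ subject to g₁(x) := 2√3 x₁x₂ − 2x₂² − x₃ ≤ 0, g₂(x) := x₂² − 3x₁² − x₃ ≤ 0, g₃(x) := −2√3 x₁x₂ − 2x₂² − x₃ ≤ 0. Then x* = (0,0,0) is a global minimizer at which MFCQ holds, the critical subspace is S(x*) = {d ∈ ℝ³ : d₃ = 0}, the set of Lagrange multipliers is Λ(x*) = {μ ∈ ℝ³₊ : μ₁ + μ₂ + μ₃ = 1}, and WSOC fails for every multiplier: for every μ ∈ Λ(x*) there exists d ∈ S(x*) with dᵀ∇²ₓₓL(x*,μ)d < 0. -/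

import Mathlib

open scoped BigOperators
open Matrix

attribute [local instance] Classical.propDecidable

noncomputable section

/-- The quadratic form `d ↦ dᵀ ∇²φ(x) d` of the Hessian of `φ` at `x`. -/
def hessQ {n : ℕ} (φ : (Fin n → ℝ) → ℝ) (x d : Fin n → ℝ) : ℝ :=
  iteratedFDeriv ℝ 2 φ x ![d, d]

/-- Feasibility for an inequality-constrained problem. -/
def FeasI {n p : ℕ} (g : Fin p → (Fin n → ℝ) → ℝ) (x : Fin n → ℝ) : Prop :=
  ∀ j, g j x ≤ 0

/-- The Lagrangian of an inequality-constrained problem. -/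
def LagrI {n p : ℕ} (f : (Fin n → ℝ) → ℝ) (g : Fin p → (Fin n → ℝ) → ℝ)
    (mu : Fin p → ℝ) (x : Fin n → ℝ) : ℝ :=
  f x + ∑ j, mu j * g j x

/-- `mu` is a Lagrange multiplier at `xs`, i.e. `mu ∈ Λ(xs)`. -/
def IsLagMultI {n p : ℕ} (f : (Fin n → ℝ) → ℝ) (g : Fin p → (Fin n → ℝ) → ℝ)
    (xs : Fin n → ℝ) (mu : Fin p → ℝ) : Prop :=
  (∀ j, 0 ≤ mu j) ∧ fderiv ℝ (LagrI f g mu) xs = 0 ∧ ∀ j, mu j * g j xs = 0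

/-- MFCQ for an inequality-constrained problem. -/
def MFCQI {n p : ℕ} (g : Fin p → (Fin n → ℝ) → ℝ) (xs : Fin n → ℝ) : Prop :=
  ∃ d : Fin n → ℝ, ∀ j, g j xs = 0 → fderiv ℝ (g j) xs d < 0

/-- Membership in the critical subspace `S(xs)`. -/
def critSubI {n p : ℕ} (g : Fin p → (Fin n → ℝ) → ℝ) (xs d : Fin n → ℝ) : Prop :=
  ∀ j, g j xs = 0 → fderiv ℝ (g j) xs d = 0

/-- Objective of the Arutyunov/Anitescu-type example. -/
def f13 : (Fin 3 → ℝ) → ℝ := fun x => x 2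

/-- Constraints of the Arutyunov/Anitescu-type example. -/
def g13 : Fin 3 → (Fin 3 → ℝ) → ℝ :=
  ![fun x => 2 * Real.sqrt 3 * x 0 * x 1 - 2 * (x 1) ^ 2 - x 2,
    fun x => (x 1) ^ 2 - 3 * (x 0) ^ 2 - x 2,
    fun x => -(2 * Real.sqrt 3) * x 0 * x 1 - 2 * (x 1) ^ 2 - x 2]

/-!
Every function of the problem is a quadratic form in `(x₁, x₂)` plus a linear function, so at the
origin its gradient is the linear part and its Hessian is twice the form. All constraints have
gradient `-e₃` there, which gives MFCQ, the critical plane `d₃ = 0` and the multiplier simplex.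

In polar coordinates `(x₁, x₂) = r (cos θ, sin θ)` the three forms are `r² (2 cos (2θ - φⱼ) - 1)`
with `φⱼ = π/3, π, -π/3` spaced `2π/3` apart, so one of them is nonnegative and feasibility forces
`x₃ ≥ 0`. The Hessian of the Lagrangian is `-6 μ₂` in direction `e₁` and `2 μ₂ - 4 (μ₁ + μ₃)` in
direction `e₂`; on the simplex these cannot both be nonnegative.
-/

section QuadraticFunction

variable {𝕜 E F : Type*} [NontriviallyNormedField 𝕜] [NormedAddCommGroup E] [NormedSpace 𝕜 E]
  [NormedAddCommGroup F] [NormedSpace 𝕜 F] (B : E →L[𝕜] E →L[𝕜] F) (ℓ : E →L[𝕜] F)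

theorem hasFDerivAt_bilinear_diag_add (y : E) :
    HasFDerivAt (fun x => B x x + ℓ x) ((B + B.flip) y + ℓ) y := by
  refine ((B.hasFDerivAt_of_bilinear (hasFDerivAt_id y) (hasFDerivAt_id y)).add
    ℓ.hasFDerivAt).congr_fderiv ?_
  ext h
  simp [add_comm]

theorem fderiv_bilinear_diag_add :
    fderiv 𝕜 (fun x => B x x + ℓ x) = fun y => (B + B.flip) y + ℓ :=
  funext fun y => (hasFDerivAt_bilinear_diag_add B ℓ y).fderiv

theorem fderiv_bilinear_diag_add_zero : fderiv 𝕜 (fun x => B x x + ℓ x) 0 = ℓ := by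
  simp [fderiv_bilinear_diag_add]

theorem iteratedFDeriv_two_bilinear_diag_add (x d : E) :
    iteratedFDeriv 𝕜 2 (fun x => B x x + ℓ x) x ![d, d] = B d d + B d d := by
  rw [iteratedFDeriv_two_apply, fderiv_bilinear_diag_add,
    (((B + B.flip).hasFDerivAt).add_const ℓ).fderiv]
  simp

end QuadraticFunction

open ContinuousLinearMap

def coordMul {n : ℕ} (i j : Fin n) : (Fin n → ℝ) →L[ℝ] (Fin n → ℝ) →L[ℝ] ℝ :=
  (proj i).smulRight (proj j)

namespace BaccariExample

def planarForm (a b c : ℝ) : (Fin 3 → ℝ) →L[ℝ] (Fin 3 → ℝ) →L[ℝ] ℝ :=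
  a • coordMul 0 1 + b • coordMul 1 1 + c • coordMul 0 0

theorem planarForm_apply (a b c : ℝ) (x y : Fin 3 → ℝ) :
    planarForm a b c x y = a * (x 0 * y 1) + b * (x 1 * y 1) + c * (x 0 * y 0) := rfl

theorem g13_eq_planarForm (j : Fin 3) :
    g13 j = fun x => planarForm (![2 * √3, 0, -(2 * √3)] j) (![-2, 1, -2] j) (![0, -3, 0] j) x x
      + (-proj 2 : (Fin 3 → ℝ) →L[ℝ] ℝ) x := by
  fin_cases j <;> funext x <;>
    simp only [g13, planarForm_apply, _root_.neg_apply, proj_apply, Fin.zero_eta, Fin.mk_one,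
      Fin.reduceFinMk, cons_val_zero, cons_val_one, cons_val] <;> ring

theorem lagrI_eq_planarForm (mu : Fin 3 → ℝ) :
    LagrI f13 g13 mu = fun x => planarForm (2 * √3 * (mu 0 - mu 2))
      (mu 1 - 2 * (mu 0 + mu 2)) (-3 * mu 1) x x
      + ((1 - (mu 0 + mu 1 + mu 2)) • proj 2 : (Fin 3 → ℝ) →L[ℝ] ℝ) x := by
  funext x
  simp only [LagrI, f13, g13, Fin.sum_univ_three, planarForm_apply, cons_val_zero, cons_val_one,
    cons_val, _root_.smul_apply, proj_apply, smul_eq_mul]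
  ring

theorem hessQ_lagrI (mu d : Fin 3 → ℝ) :
    hessQ (LagrI f13 g13 mu) 0 d = 2 * (2 * √3 * (mu 0 - mu 2) * d 0 * d 1
      + (mu 1 - 2 * (mu 0 + mu 2)) * d 1 ^ 2 - 3 * mu 1 * d 0 ^ 2) := by
  rw [hessQ, lagrI_eq_planarForm, iteratedFDeriv_two_bilinear_diag_add, planarForm_apply]
  ring

theorem g13_zero (j : Fin 3) : g13 j 0 = 0 := by
  fin_cases j <;> simp [g13]

theorem fderiv_g13_zero_apply (j : Fin 3) (d : Fin 3 → ℝ) : fderiv ℝ (g13 j) 0 d = -d 2 := by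
  rw [g13_eq_planarForm j, fderiv_bilinear_diag_add_zero]
  simp

theorem fderiv_lagrI_zero (mu : Fin 3 → ℝ) :
    fderiv ℝ (LagrI f13 g13 mu) 0 = (1 - (mu 0 + mu 1 + mu 2)) • proj 2 := by
  rw [lagrI_eq_planarForm, fderiv_bilinear_diag_add_zero]

theorem critSubI_g13_iff (d : Fin 3 → ℝ) : critSubI g13 0 d ↔ d 2 = 0 := by
  simp [critSubI, g13_zero, fderiv_g13_zero_apply]

theorem fderiv_lagrI_zero_eq_zero_iff (mu : Fin 3 → ℝ) :
    fderiv ℝ (LagrI f13 g13 mu) 0 = 0 ↔ mu 0 + mu 1 + mu 2 = 1 := by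
  rw [fderiv_lagrI_zero]
  constructor
  · intro h
    have := congr($h (Pi.single 2 1))
    simp only [_root_.smul_apply, proj_apply, Pi.single_eq_same, smul_eq_mul, mul_one,
      _root_.zero_apply] at this
    linarith
  · intro h
    simp [h]

theorem isLagMultI_iff (mu : Fin 3 → ℝ) :
    IsLagMultI f13 g13 0 mu ↔ (∀ j, 0 ≤ mu j) ∧ mu 0 + mu 1 + mu 2 = 1 := by
  simp [IsLagMultI, fderiv_lagrI_zero_eq_zero_iff, g13_zero]

theorem sqrt3_forms_max_nonneg (a b : ℝ) :
    0 ≤ 2 * √3 * a * b - 2 * b ^ 2 ∨ 0 ≤ b ^ 2 - 3 * a ^ 2 ∨ 0 ≤ -(2 * √3) * a * b - 2 * b ^ 2 := by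
  by_contra! ⟨h₁, h₂, h₃⟩
  have hs : √3 ^ 2 = 3 := Real.sq_sqrt (by norm_num)
  have hb : 3 * a ^ 2 * b ^ 2 < b ^ 4 := by
    have := mul_pos (neg_pos.2 h₁) (neg_pos.2 h₃)
    linear_combination this / 4 - a ^ 2 * b ^ 2 * hs
  nlinarith [mul_nonneg (sq_nonneg b) (neg_nonneg.2 h₂.le)]

theorem nonneg_of_feasI_g13 {x : Fin 3 → ℝ} (hx : FeasI g13 x) : 0 ≤ x 2 := by
  have h₁ := hx 0
  have h₂ := hx 1
  have h₃ := hx 2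
  simp only [g13, cons_val_zero, cons_val_one, cons_val] at h₁ h₂ h₃
  rcases sqrt3_forms_max_nonneg (x 0) (x 1) with h | h | h <;> linarith

theorem exists_critSubI_hessQ_lagrI_neg {mu : Fin 3 → ℝ} (hmu : ∀ j, 0 ≤ mu j)
    (hsum : mu 0 + mu 1 + mu 2 = 1) :
    ∃ d, critSubI g13 0 d ∧ hessQ (LagrI f13 g13 mu) 0 d < 0 := by
  rcases (hmu 1).lt_or_eq with h | h
  · refine ⟨![1, 0, 0], (critSubI_g13_iff _).2 rfl, ?_⟩
    have := hessQ_lagrI mu ![1, 0, 0]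
    simp only [cons_val_zero, cons_val_one] at this
    linarith
  · refine ⟨![0, 1, 0], (critSubI_g13_iff _).2 rfl, ?_⟩
    have := hessQ_lagrI mu ![0, 1, 0]
    simp only [cons_val_zero, cons_val_one] at this
    linarith

end BaccariExample

open BaccariExample

theorem stmt13 :
    (FeasI g13 (0 : Fin 3 → ℝ) ∧ ∀ x, FeasI g13 x → f13 (0 : Fin 3 → ℝ) ≤ f13 x) ∧
    MFCQI g13 (0 : Fin 3 → ℝ) ∧
    ({d : Fin 3 → ℝ | critSubI g13 (0 : Fin 3 → ℝ) d} = {d : Fin 3 → ℝ | d 2 = 0}) ∧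
    (∀ mu : Fin 3 → ℝ, IsLagMultI f13 g13 (0 : Fin 3 → ℝ) mu ↔
      ((∀ j, 0 ≤ mu j) ∧ mu 0 + mu 1 + mu 2 = 1)) ∧
    (∀ mu : Fin 3 → ℝ, IsLagMultI f13 g13 (0 : Fin 3 → ℝ) mu →
      ∃ d : Fin 3 → ℝ, critSubI g13 (0 : Fin 3 → ℝ) d ∧
        hessQ (LagrI f13 g13 mu) (0 : Fin 3 → ℝ) d < 0) := by
  refine ⟨⟨fun j => (g13_zero j).le, fun x hx => nonneg_of_feasI_g13 hx⟩,
    ⟨![0, 0, 1], fun j _ => ?_⟩, Set.ext critSubI_g13_iff, isLagMultI_iff, fun mu hmu => ?_⟩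
  · simp [fderiv_g13_zero_apply]
  · obtain ⟨hnonneg, hsum⟩ := (isLagMultI_iff mu).1 hmu
    exact exists_critSubI_hessQ_lagrI_neg hnonneg hsum
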